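/- arXiv:1604.05531 — 3 statements merged into one kernel-verified Lean document; each statement's English description precedes it below -/
import Mathlib

section
/- Let R be a ring and M, N be R-modules. If r₁, r₂ ∈ R form a regular sequence on N, then r₁, r₂ form a regular sequence on the R-module Hom_R(M, N). -/
/-- If `r₁, r₂` is a regular sequence on the `R`-module `N` (i.e. `r₁` is a nonzerodivisor
on `N` and `r₂` is a nonzerodivisor on `N/r₁N`), then `r₁, r₂` is a regular sequence on the
`R`-module `Hom_R(M, N)`. -/
theorem regular_sequence_hom {R M N : Type*} [CommRing R] [AddCommGroup M] [Module R M]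
    [AddCommGroup N] [Module R N] (r₁ r₂ : R)
    (h₁ : IsSMulRegular N r₁)
    (h₂ : IsSMulRegular (N ⧸ ((Ideal.span {r₁}) • (⊤ : Submodule R N))) r₂) :
    IsSMulRegular (M →ₗ[R] N) r₁ ∧
      IsSMulRegular ((M →ₗ[R] N) ⧸ ((Ideal.span {r₁}) • (⊤ : Submodule R (M →ₗ[R] N)))) r₂ := by
  constructor
  · intro f g hfg
    ext m
    exact h₁ (by simpa using LinearMap.congr_fun hfg m)
  · intro x y hxy
    obtain ⟨f, rfl⟩ := Submodule.Quotient.mk_surjective _ x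
    obtain ⟨g, rfl⟩ := Submodule.Quotient.mk_surjective _ y
    rw [← sub_eq_zero, ← Submodule.Quotient.mk_sub, Submodule.Quotient.mk_eq_zero]
    set d := f - g with hd
    have hmem : r₂ • d ∈ (Ideal.span {r₁}) • (⊤ : Submodule R (M →ₗ[R] N)) := by
      rw [← Submodule.Quotient.mk_eq_zero, Submodule.Quotient.mk_smul,
        Submodule.Quotient.mk_sub, smul_sub]
      simp [hxy]
    rw [Submodule.ideal_span_singleton_smul, ← SetLike.mem_coe,
      Submodule.coe_pointwise_smul] at hmem
    obtain ⟨g', -, hg'⟩ := Set.mem_smul_set.mp hmem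
    have hex : ∀ m : M, ∃ n : N, r₁ • n = d m := by
      intro m
      have hdm : (d m : N) ∈ (Ideal.span {r₁}) • (⊤ : Submodule R N) := by
        rw [← Submodule.Quotient.mk_eq_zero]
        apply h₂
        show r₂ • _ = r₂ • (0 : N ⧸ (Ideal.span {r₁}) • (⊤ : Submodule R N))
        rw [smul_zero, ← Submodule.Quotient.mk_smul, Submodule.Quotient.mk_eq_zero,
          Submodule.ideal_span_singleton_smul]
        have hgm : r₂ • d m = r₁ • g' m := by
          have := LinearMap.congr_fun hg' m
          simpa using this.symm
        rw [hgm]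
        exact Submodule.smul_mem_pointwise_smul _ _ _ trivial
      rw [Submodule.ideal_span_singleton_smul, ← SetLike.mem_coe,
        Submodule.coe_pointwise_smul] at hdm
      obtain ⟨n, -, hn⟩ := Set.mem_smul_set.mp hdm
      exact ⟨n, hn⟩
    choose e he using hex
    have hlin : ∀ a b : M, e (a + b) = e a + e b := by
      intro a b
      apply h₁
      show r₁ • _ = r₁ • _
      rw [he, smul_add, he, he, map_add]
    have hsmul : ∀ (c : R) (a : M), e (c • a) = c • e a := by
      intro c a
      apply h₁
      show r₁ • _ = r₁ • _
      rw [he, smul_comm, he, map_smul]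
    let h : M →ₗ[R] N :=
      { toFun := e
        map_add' := hlin
        map_smul' := fun c a => by simpa using hsmul c a }
    have hdh : d = r₁ • h := by
      ext m
      simp [h, he]
    rw [hdh, Submodule.ideal_span_singleton_smul]
    exact Submodule.smul_mem_pointwise_smul _ _ _ trivial
end

section
/- Let R be an integrally closed domain with fraction field K, let L/K be a finite field extension, and let B be the integral closure of R in L. If b ∈ B satisfies b ⊗ 1 = 1 ⊗ b in B ⊗_R B, then b ∈ R. Equivalently, the sequence R → B ⇉ B ⊗_R B (where the two maps send b to b ⊗ 1 and 1 ⊗ b) is exact at B, i.e., the equalizer of the two maps is exactly the image of R. -/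
open TensorProduct

/-!
An `R`-algebra map `f : S → L` into a `K`-algebra induces `S ⊗[R] S → L ⊗[K] L`, so
`b ⊗ 1 = 1 ⊗ b` in `B ⊗[R] B` persists in `L ⊗[K] L`. Since `L` is faithfully flat over the
field `K`, the equalizer of `L ⇉ L ⊗[K] L` is `K`, hence `b ∈ K`; being integral over the
integrally closed `R`, it lies in `R`.
-/

theorem Algebra.TensorProduct.tmul_one_eq_one_tmul_of_algHom {R K S L : Type*}
    [CommSemiring R] [CommSemiring K] [CommSemiring S] [CommSemiring L]
    [Algebra R K] [Algebra R S] [Algebra K L] [Algebra R L] [IsScalarTower R K L]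
    (f : S →ₐ[R] L) {s : S} (hs : (s ⊗ₜ[R] (1 : S) : S ⊗[R] S) = 1 ⊗ₜ[R] s) :
    (f s ⊗ₜ[K] (1 : L) : L ⊗[K] L) = 1 ⊗ₜ[K] f s := by
  let g : S ⊗[R] S →ₐ[R] L ⊗[K] L :=
    lift (((includeLeft (S := K)).restrictScalars R).comp f)
      (((includeRight (R := K)).restrictScalars R).comp f)
      fun _ _ ↦ Commute.all _ _
  simpa [g] using congrArg g hs

theorem mem_range_algebraMap_of_tmul_one_eq_one_tmul {K L : Type*} [Field K] [CommRing L]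
    [Nontrivial L] [Algebra K L] {x : L} (hx : (x ⊗ₜ[K] (1 : L) : L ⊗[K] L) = 1 ⊗ₜ[K] x) :
    x ∈ Set.range (algebraMap K L) := by
  rw [← (Algebra.IsEffective.of_faithfullyFlat K L).eqLocus_includeLeft_includeRight]
  exact hx

theorem equalizer_tensor_eq_base_general {R K L : Type*} [CommRing R]
    [IsIntegrallyClosed R] [Field K] [Algebra R K] [IsFractionRing R K]
    [Field L] [Algebra K L] [Algebra R L] [IsScalarTower R K L]
    (b : integralClosure R L)
    (hb : (b ⊗ₜ[R] (1 : integralClosure R L) : integralClosure R L ⊗[R] integralClosure R L)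
        = (1 : integralClosure R L) ⊗ₜ[R] b) :
    ∃ r : R, algebraMap R (integralClosure R L) r = b := by
  obtain ⟨k, hk⟩ := mem_range_algebraMap_of_tmul_one_eq_one_tmul
    (Algebra.TensorProduct.tmul_one_eq_one_tmul_of_algHom (K := K) (integralClosure R L).val hb)
  have hk_int : IsIntegral R k :=
    (isIntegral_algebraMap_iff (algebraMap K L).injective).mp (hk ▸ b.2)
  obtain ⟨r, rfl⟩ := IsIntegrallyClosed.isIntegral_iff.mp hk_int
  exact ⟨r, Subtype.ext ((IsScalarTower.algebraMap_apply R K L r).trans hk)⟩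

/-- Let `R` be an integrally closed domain with fraction field `K`, `L/K` a finite field
extension, and `B` the integral closure of `R` in `L`. If `b ∈ B` satisfies
`b ⊗ 1 = 1 ⊗ b` in `B ⊗_R B`, then `b` comes from `R`. In other words, the equalizer of
the two natural maps `B ⇉ B ⊗_R B` is exactly the image of `R`. -/
theorem equalizer_tensor_eq_base {R K L : Type*} [CommRing R] [IsDomain R]
    [IsIntegrallyClosed R] [Field K] [Algebra R K] [IsFractionRing R K]
    [Field L] [Algebra K L] [FiniteDimensional K L] [Algebra R L] [IsScalarTower R K L]
    (b : integralClosure R L)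
    (hb : (b ⊗ₜ[R] (1 : integralClosure R L) : integralClosure R L ⊗[R] integralClosure R L)
        = (1 : integralClosure R L) ⊗ₜ[R] b) :
    ∃ r : R, algebraMap R (integralClosure R L) r = b :=
  equalizer_tensor_eq_base_general (K := K) b hb
end

section
/- Let R be a Noetherian ring and let I ⊆ J be ideals of R. Then the J-adic completion of the I-adic completion of R is naturally isomorphic to the J-adic completion of R: (R^∧_I)^∧_{J·R^∧_I} ≅ R^∧_J. -/
/-!
Write `Â = R^∧_I`. As `I` is finitely generated, the kernel of `Â → R ⧸ I ^ n` is `I ^ n Â`;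
since `I ^ n ⊆ J ^ n`, the kernel of the surjection `Â → R ⧸ J ^ n` is therefore
`J ^ n Â = (J Â) ^ n`. Hence `Â ⧸ (J Â) ^ n ≅ R ⧸ J ^ n` compatibly in `n`, and passing to the
inverse limit identifies `Â^∧_{JÂ}` with `R^∧_J`.
-/

open Ideal Ideal.Quotient

namespace AdicCompletion

section evalₐ

variable {R : Type*} [CommRing R] (I : Ideal R)

theorem factorPow_comp_evalₐ {m n : ℕ} (hle : m ≤ n) :
    (factorPow I hle).comp (evalₐ I n : AdicCompletion I R →+* R ⧸ I ^ n) = evalₐ I m := by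
  ext x
  obtain ⟨r, hr⟩ := Submodule.Quotient.mk_surjective _ (x.val n)
  have hm : x.val m = Submodule.Quotient.mk r := by rw [← x.property hle, ← hr]; rfl
  simp [evalₐ, eval, hm, ← hr]

theorem ker_evalₐ (hI : I.FG) (n : ℕ) :
    RingHom.ker (evalₐ I n : AdicCompletion I R →+* R ⧸ I ^ n)
      = (I ^ n).map (algebraMap R (AdicCompletion I R)) := by
  ext x
  rw [← Submodule.restrictScalars_mem R ((I ^ n).map (algebraMap R (AdicCompletion I R))),
    ← smul_top_eq_map, pow_smul_top_eq_ker_eval hI]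
  simp only [RingHom.mem_ker, LinearMap.mem_ker, evalₐ, RingHom.coe_coe, AlgHom.coe_comp,
    Function.comp_apply, AlgEquiv.coe_toAlgHom]
  exact map_eq_zero_iff _ (AlgEquiv.injective _)

end evalₐ

section ringEquivOfQuotientEquiv

variable {S T : Type*} [CommRing S] [CommRing T] {I : Ideal S} {K : Ideal T}

theorem factorPow_comp_comp_evalₐ (f : ∀ n, S ⧸ I ^ n →+* T ⧸ K ^ n)
    (hf : ∀ {m n : ℕ} (hle : m ≤ n),
      (factorPow K hle).comp (f n) = (f m).comp (factorPow I hle))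
    {m n : ℕ} (hle : m ≤ n) :
    (factorPow K hle).comp ((f n).comp (evalₐ I n : AdicCompletion I S →+* S ⧸ I ^ n))
      = (f m).comp (evalₐ I m) := by
  rw [← RingHom.comp_assoc, hf, RingHom.comp_assoc, factorPow_comp_evalₐ]

theorem factorPow_comp_symm (e : ∀ n, S ⧸ I ^ n ≃+* T ⧸ K ^ n) {m n : ℕ} (hle : m ≤ n)
    (he : (factorPow K hle).comp (e n : S ⧸ I ^ n →+* T ⧸ K ^ n)
      = (e m : _ →+* _).comp (factorPow I hle)) :
    (factorPow I hle).comp ((e n).symm : T ⧸ K ^ n →+* S ⧸ I ^ n)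
      = ((e m).symm : _ →+* _).comp (factorPow K hle) := by
  refine RingHom.ext fun x ↦ ?_
  obtain ⟨y, rfl⟩ := (e n).surjective x
  simpa using (congrArg (e m).symm (RingHom.congr_fun he y)).symm

variable (e : ∀ n, S ⧸ I ^ n ≃+* T ⧸ K ^ n)
  (he : ∀ {m n : ℕ} (hle : m ≤ n),
    (factorPow K hle).comp (e n : S ⧸ I ^ n →+* T ⧸ K ^ n) = (e m : _ →+* _).comp (factorPow I hle))

noncomputable def ringEquivOfQuotientEquiv : AdicCompletion I S ≃+* AdicCompletion K T :=
  RingEquiv.ofRingHom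
    (liftRingHom K _ <|
      factorPow_comp_comp_evalₐ (fun n ↦ (e n : S ⧸ I ^ n →+* T ⧸ K ^ n)) he)
    (liftRingHom I _ <|
      factorPow_comp_comp_evalₐ (fun n ↦ ((e n).symm : T ⧸ K ^ n →+* S ⧸ I ^ n))
        fun hle ↦ factorPow_comp_symm e hle (he hle))
    (RingHom.ext fun x ↦ ext_evalₐ fun n ↦ by simp)
    (RingHom.ext fun x ↦ ext_evalₐ fun n ↦ by simp)

theorem evalₐ_ringEquivOfQuotientEquiv (n : ℕ) (x : AdicCompletion I S) :
    evalₐ K n (ringEquivOfQuotientEquiv e he x) = e n (evalₐ I n x) :=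
  evalₐ_liftRingHom _ _ (factorPow_comp_comp_evalₐ _ he) n x

end ringEquivOfQuotientEquiv

section evalOfLE

variable {R : Type*} [CommRing R] {I J : Ideal R}

noncomputable def evalOfLE (hIJ : I ≤ J) (n : ℕ) : AdicCompletion I R →+* R ⧸ J ^ n :=
  (factor (pow_right_mono hIJ n)).comp (evalₐ I n)

theorem evalOfLE_algebraMap (hIJ : I ≤ J) (n : ℕ) (r : R) :
    evalOfLE hIJ n (algebraMap R (AdicCompletion I R) r) = Ideal.Quotient.mk (J ^ n) r := by
  simp [evalOfLE]

theorem evalOfLE_surjective (hIJ : I ≤ J) (n : ℕ) : Function.Surjective (evalOfLE hIJ n) :=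
  (factor_surjective (pow_right_mono hIJ n)).comp (surjective_evalₐ I n)

theorem factorPow_comp_evalOfLE (hIJ : I ≤ J) {m n : ℕ} (hle : m ≤ n) :
    (factorPow J hle).comp (evalOfLE hIJ n) = evalOfLE hIJ m := by
  rw [evalOfLE, evalOfLE, ← factorPow_comp_evalₐ I hle, ← RingHom.comp_assoc,
    ← RingHom.comp_assoc, factor_comp, factor_comp]

theorem ker_evalOfLE (hI : I.FG) (hIJ : I ≤ J) (n : ℕ) :
    RingHom.ker (evalOfLE hIJ n) = J.map (algebraMap R (AdicCompletion I R)) ^ n := by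
  have hmk : Ideal.Quotient.mk (I ^ n)
      = (evalₐ I n : AdicCompletion I R →+* R ⧸ I ^ n).comp (algebraMap R _) := by
    rw [AlgHom.comp_algebraMap, Ideal.Quotient.algebraMap_eq]
  rw [evalOfLE, ← RingHom.comap_ker, factor_ker, hmk, ← map_map,
    comap_map_of_surjective' (evalₐ I n : AdicCompletion I R →+* R ⧸ I ^ n)
      (surjective_evalₐ I n), ker_evalₐ I hI,
    sup_eq_left.mpr (map_mono (pow_right_mono hIJ n)), Ideal.map_pow]

noncomputable def quotientPowEquivOfLE (hI : I.FG) (hIJ : I ≤ J) (n : ℕ) :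
    AdicCompletion I R ⧸ J.map (algebraMap R (AdicCompletion I R)) ^ n ≃+* R ⧸ J ^ n :=
  (quotEquivOfEq (ker_evalOfLE hI hIJ n).symm).trans
    (RingHom.quotientKerEquivOfSurjective (evalOfLE_surjective hIJ n))

theorem quotientPowEquivOfLE_mk (hI : I.FG) (hIJ : I ≤ J) (n : ℕ) (x : AdicCompletion I R) :
    quotientPowEquivOfLE hI hIJ n (Ideal.Quotient.mk _ x) = evalOfLE hIJ n x :=
  rfl

theorem factorPow_comp_quotientPowEquivOfLE (hI : I.FG) (hIJ : I ≤ J) {m n : ℕ}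
    (hle : m ≤ n) :
    (factorPow J hle).comp (quotientPowEquivOfLE hI hIJ n :
        AdicCompletion I R ⧸ J.map (algebraMap R (AdicCompletion I R)) ^ n →+* R ⧸ J ^ n)
      = (quotientPowEquivOfLE hI hIJ m :
        AdicCompletion I R ⧸ J.map (algebraMap R (AdicCompletion I R)) ^ m →+* R ⧸ J ^ m).comp
          (factorPow _ hle) :=
  Ideal.Quotient.ringHom_ext <| RingHom.ext fun x ↦ by
    simp [quotientPowEquivOfLE_mk, ← factorPow_comp_evalOfLE hIJ hle]

end evalOfLE

end AdicCompletion

/-- Let `R` be a Noetherian ring and `I ⊆ J` ideals of `R`. Then the `J`-adic completion of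
the `I`-adic completion of `R` is naturally isomorphic to the `J`-adic completion of `R`,
compatibly with the canonical maps from `R`. -/
theorem adicCompletion_adicCompletion {R : Type*} [CommRing R] [IsNoetherianRing R]
    (I J : Ideal R) (hIJ : I ≤ J) :
    ∃ φ : AdicCompletion (J.map (algebraMap R (AdicCompletion I R))) (AdicCompletion I R)
        ≃+* AdicCompletion J R,
      ∀ r : R,
        φ (algebraMap (AdicCompletion I R)
            (AdicCompletion (J.map (algebraMap R (AdicCompletion I R))) (AdicCompletion I R))
            (algebraMap R (AdicCompletion I R) r))
          = algebraMap R (AdicCompletion J R) r := by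
  have hI : I.FG := IsNoetherian.noetherian I
  refine ⟨AdicCompletion.ringEquivOfQuotientEquiv (AdicCompletion.quotientPowEquivOfLE hI hIJ)
    (AdicCompletion.factorPow_comp_quotientPowEquivOfLE hI hIJ),
    fun r ↦ AdicCompletion.ext_evalₐ fun n ↦ ?_⟩
  rw [AdicCompletion.evalₐ_ringEquivOfQuotientEquiv, AlgHom.commutes, AlgHom.commutes,
    Ideal.Quotient.algebraMap_eq, Ideal.Quotient.algebraMap_eq,
    AdicCompletion.quotientPowEquivOfLE_mk, AdicCompletion.evalOfLE_algebraMap]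
end
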